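/- Let $\Pi$ be the cycle partition of a uniform random permutation of $[n]$ conditioned to have $k$ cycles, and let $B_i$ indicate that $i$ is the smallest element of its cycle. Then $\Pr[B_n = 1] = c(n-1,k-1)/c(n,k)$, where $c(n,k)$ are unsigned Stirling numbers of the first kind, and this probability is increasing in $k$ for $1 \le k \le n$. -/

import Mathlib

/-!
Deleting a point `a` from its cycle, `σ ↦ swap a (σ a) * σ`, identifies permutations with pairs
(`σ a`, permutation of the remaining points); it removes one cycle when `σ a = a` and keeps the
number of cycles otherwise. Counting along this bijection gives the recursion
`c(n+1, k+1) = n c(n, k+1) + c(n, k)` for the number of permutations with `k` cycles, and shows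
that `c(n-1, k-1)` of them fix `a`. After cross-multiplying and expanding by the recursion, the
monotonicity of `c(n-1, k-1) / c(n, k)` in `k` is `n - 1` times the log-concavity of
`k ↦ c(n-1, k)`, which propagates through the recursion by induction on `n` because `c(n, ·)` has
no internal zeros.
-/

open Finset

/-- Unsigned Stirling numbers of the first kind. -/
def stirlingFirst : ℕ → ℕ → ℕ
  | 0, k => if k = 0 then 1 else 0
  | n + 1, k =>
      if k = 0 then 0
      else n * stirlingFirst n k + stirlingFirst n (k - 1)

theorem stirlingFirst_eq_nat_stirlingFirst : stirlingFirst = Nat.stirlingFirst := by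
  funext n k
  induction n generalizing k with
  | zero => cases k <;> rfl
  | succ n ih => cases k <;> simp [stirlingFirst, Nat.stirlingFirst_succ_succ, ih]

namespace Nat

theorem stirlingFirst_pos {n k : ℕ} (hk : 0 < k) (hkn : k ≤ n) : 0 < stirlingFirst n k := by
  induction n generalizing k with
  | zero => omega
  | succ n ih =>
    obtain ⟨j, rfl⟩ := Nat.exists_eq_add_of_le' hk
    rcases j with _ | j
    · rw [stirlingFirst_one_right]
      exact factorial_pos n
    · rw [stirlingFirst_succ_succ]
      have := ih (k := j + 1) (by omega) (by omega)
      positivity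

theorem mul_le_mul_of_logConcave {a : ℕ → ℕ} (ha : ∀ i, a i * a (i + 2) ≤ a (i + 1) ^ 2) {i : ℕ}
    (h₁ : 0 < a (i + 1)) (h₂ : 0 < a (i + 2)) : a i * a (i + 3) ≤ a (i + 1) * a (i + 2) := by
  have key : (a (i + 1) * a (i + 2)) * (a i * a (i + 3)) ≤
      (a (i + 1) * a (i + 2)) * (a (i + 1) * a (i + 2)) := by
    calc (a (i + 1) * a (i + 2)) * (a i * a (i + 3))
        = (a i * a (i + 2)) * (a (i + 1) * a (i + 3)) := by ring
      _ ≤ a (i + 1) ^ 2 * a (i + 2) ^ 2 := Nat.mul_le_mul (ha i) (ha (i + 1))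
      _ = _ := by ring
  exact Nat.le_of_mul_le_mul_left key (by positivity)

theorem stirlingFirst_logConcave (n k : ℕ) :
    stirlingFirst n k * stirlingFirst n (k + 2) ≤ stirlingFirst n (k + 1) ^ 2 := by
  induction n generalizing k with
  | zero => simp [stirlingFirst_eq_zero_of_lt (show 0 < k + 2 by omega)]
  | succ n ih =>
    rcases k with _ | i
    · simp
    have outer : stirlingFirst n i * stirlingFirst n (i + 3) ≤
        stirlingFirst n (i + 1) * stirlingFirst n (i + 2) := by
      rcases Nat.lt_or_ge n (i + 3) with hn | hn
      · simp [stirlingFirst_eq_zero_of_lt hn]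
      rcases i with _ | i
      · obtain ⟨m, rfl⟩ := Nat.exists_eq_add_of_le' (show 1 ≤ n by omega)
        simp
      · exact mul_le_mul_of_logConcave ih (stirlingFirst_pos (by omega) (by omega))
          (stirlingFirst_pos (by omega) (by omega))
    simp only [stirlingFirst_succ_succ]
    linarith [ih i, Nat.mul_le_mul_left n outer, Nat.mul_le_mul_left (n * n) (ih (i + 1))]

theorem stirlingFirst_div_stirlingFirst_succ_le {n k : ℕ} (hkn : k + 1 ≤ n) :
    (stirlingFirst n k : ℝ) / stirlingFirst (n + 1) (k + 1) ≤
      (stirlingFirst n (k + 1) : ℝ) / stirlingFirst (n + 1) (k + 2) := by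
  have cross : stirlingFirst n k * stirlingFirst (n + 1) (k + 2) ≤
      stirlingFirst n (k + 1) * stirlingFirst (n + 1) (k + 1) := by
    rw [stirlingFirst_succ_succ, stirlingFirst_succ_succ]
    nlinarith [Nat.mul_le_mul_left n (stirlingFirst_logConcave n k)]
  rw [div_le_div_iff₀ (mod_cast stirlingFirst_pos (by omega) (by omega))
    (mod_cast stirlingFirst_pos (by omega) (by omega))]
  exact_mod_cast cross

end Nat

open Equiv

namespace Equiv.Perm

variable {α β : Type*} [DecidableEq α] [Fintype α] [DecidableEq β] [Fintype β]

def numCycles (σ : Perm α) : ℕ := σ.partition.parts.card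

theorem numCycles_eq (σ : Perm α) :
    numCycles σ = Multiset.card σ.cycleType + (Fintype.card α - #σ.support) := by
  simp [numCycles, parts_partition]

theorem numCycles_eq_card_cycleType_add_card_fixedPoints (σ : Perm α) :
    numCycles σ = Multiset.card σ.cycleType + #{x | σ x = x} := by
  rw [numCycles_eq, ← card_compl]
  congr
  ext x
  simp

theorem numCycles_one : numCycles (1 : Perm α) = Fintype.card α := by
  simp [numCycles_eq]

theorem IsCycle.numCycles_add_card_support {c : Perm α} (hc : c.IsCycle) :
    numCycles c + #c.support = Fintype.card α + 1 := by
  rw [numCycles_eq, hc.cycleType, Multiset.card_singleton]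
  have := card_le_univ c.support
  omega

theorem Disjoint.numCycles_mul_add_card {σ τ : Perm α} (h : σ.Disjoint τ) :
    numCycles (σ * τ) + Fintype.card α = numCycles σ + numCycles τ := by
  have := card_le_univ (σ * τ).support
  rw [h.card_support_mul] at this
  simp only [numCycles_eq, h.cycleType_mul, h.card_support_mul, Multiset.card_add]
  omega

theorem numCycles_extendDomain {p : β → Prop} [DecidablePred p] (f : α ≃ Subtype p)
    (g : Perm α) :
    numCycles (g.extendDomain f) = numCycles g + (Fintype.card β - Fintype.card α) := by
  have := card_le_univ g.support
  have := Fintype.card_le_of_embedding (f.toEmbedding.trans (Function.Embedding.subtype p))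
  simp only [numCycles_eq, cycleType_extendDomain, card_support_extend_domain]
  omega

theorem numCycles_permCongr (e : α ≃ β) (σ : Perm α) :
    numCycles (e.permCongr σ) = numCycles σ := by
  have : e.permCongr σ = σ.extendDomain (e.trans (subtypeUnivEquiv fun _ => trivial).symm) := by
    ext x
    simp [Perm.extendDomain_apply_subtype, Equiv.permCongr_apply]
  rw [this, numCycles_extendDomain, Fintype.card_congr e, Nat.sub_self, add_zero]

theorem numCycles_optionCongr (σ : Perm α) : numCycles σ.optionCongr = numCycles σ + 1 := by
  have : σ.optionCongr = σ.extendDomain (optionIsSomeEquiv α).symm := by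
    ext (_ | x)
    · simp [extendDomain_apply_not_subtype]
    · simp [extendDomain_apply_subtype]
  rw [this, numCycles_extendDomain, Fintype.card_option, Nat.add_sub_cancel_left]

theorem IsCycle.numCycles_swap_mul {c : Perm α} (hc : c.IsCycle) {x : α} (hx : c x ≠ x) :
    numCycles (swap x (c x) * c) = numCycles c + 1 := by
  by_cases hcc : c (c x) = x
  · have hswap : c = swap x (c x) := hc.eq_swap_of_apply_apply_eq_self hx hcc
    have hone : swap x (c x) * c = 1 := mul_eq_one_iff_inv_eq.mpr (by rw [swap_inv, ← hswap])
    have hcard : #c.support = 2 := by rw [hswap, card_support_swap (Ne.symm hx)]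
    have := hc.numCycles_add_card_support
    rw [hone, numCycles_one]
    omega
  · have hc' := hc.swap_mul hx hcc
    have h1 := hc'.numCycles_add_card_support
    have h2 := hc.numCycles_add_card_support
    rw [support_swap_mul_eq c x hcc, card_sdiff_of_subset (by simpa using hx),
      card_singleton] at h1
    have := card_pos.mpr ⟨x, mem_support.mpr hx⟩
    omega

theorem numCycles_swap_mul_of_apply_ne {g : Perm α} {x : α} (hx : g x ≠ x) :
    numCycles (swap x (g x) * g) = numCycles g + 1 := by
  -- `g = (g * c⁻¹) * c` with disjoint factors, and the swap only moves points of `c`.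
  set c := g.cycleOf x
  have hc : c.IsCycle := isCycle_cycleOf g hx
  have hcx : c x = g x := cycleOf_apply_self g x
  have hd : (g * c⁻¹).Disjoint c :=
    disjoint_mul_inv_of_mem_cycleFactorsFinset
      (cycleOf_mem_cycleFactorsFinset_iff.mpr (mem_support.mpr hx))
  have hdswap : (g * c⁻¹).Disjoint (swap x (c x)) := hd.mono le_rfl (by
    have hxc : x ∈ c.support := mem_support.mpr (hcx ▸ hx)
    rw [support_swap (Ne.symm (hcx ▸ hx)), insert_subset_iff, singleton_subset_iff]
    exact ⟨hxc, apply_mem_support.mpr hxc⟩)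
  have hd' : (g * c⁻¹).Disjoint (swap x (c x) * c) := hd.mono le_rfl (fun y hy =>
    (mem_support_swap_mul_imp_mem_support_ne hy).1)
  have hg : swap x (g x) * g = (g * c⁻¹) * (swap x (c x) * c) := by
    rw [← hcx, ← mul_assoc, hdswap.commute.eq, mul_assoc (swap _ _), inv_mul_cancel_right]
  have h1 := hd'.numCycles_mul_add_card
  have h2 := hd.numCycles_mul_add_card
  rw [← hg] at h1
  rw [inv_mul_cancel_right] at h2
  rw [hc.numCycles_swap_mul (hcx ▸ hx)] at h1
  omega

theorem numCycles_decomposeOption_symm (a : Option α) (τ : Perm α) :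
    numCycles (decomposeOption.symm (a, τ)) = numCycles τ + if a = none then 1 else 0 := by
  show numCycles (swap none a * τ.optionCongr) = _
  rcases a with _ | b
  · rw [swap_self, ← one_def, one_mul, numCycles_optionCongr, if_pos rfl]
  · have hnone : (swap none (some b) * τ.optionCongr) none = some b := by simp
    have := numCycles_swap_mul_of_apply_ne (hnone ▸ Option.some_ne_none b)
    rw [hnone, swap_mul_self_mul, numCycles_optionCongr] at this
    rw [if_neg (Option.some_ne_none b)]
    omega

theorem card_filter_numCycles_option (k : ℕ) :
    #{σ : Perm (Option α) | numCycles σ = k + 1} =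
      Fintype.card α * #{τ : Perm α | numCycles τ = k + 1} + #{τ : Perm α | numCycles τ = k} := by
  rw [card_equiv decomposeOption (t := {x | numCycles (decomposeOption.symm x) = k + 1}) (by simp)]
  simp only [card_filter, Fintype.sum_prod_type, Fintype.sum_option, numCycles_decomposeOption_symm,
    if_true, reduceCtorEq, if_false, add_zero, add_left_inj, sum_const, card_univ, smul_eq_mul]
  ring

theorem card_filter_numCycles_fixing_none (k : ℕ) :
    #{σ : Perm (Option α) | numCycles σ = k + 1 ∧ σ none = none} =
      #{τ : Perm α | numCycles τ = k} := by
  rw [card_equiv decomposeOption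
    (t := {x | numCycles (decomposeOption.symm x) = k + 1 ∧ x.1 = none}) (by simp)]
  simp only [card_filter, Fintype.sum_prod_type, Fintype.sum_option, numCycles_decomposeOption_symm]
  simp

theorem numCycles_pos [Nonempty α] (σ : Perm α) : 0 < numCycles σ := by
  rw [numCycles, Multiset.card_pos]
  intro h
  have := σ.partition.parts_sum
  rw [h, Multiset.sum_zero] at this
  exact Fintype.card_ne_zero this.symm

theorem card_filter_numCycles_congr (e : α ≃ β) (k : ℕ) :
    #{σ : Perm α | numCycles σ = k} = #{σ : Perm β | numCycles σ = k} :=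
  card_equiv e.permCongr (by simp [numCycles_permCongr])

theorem card_filter_numCycles_fin (n k : ℕ) :
    #{σ : Perm (Fin n) | numCycles σ = k} = Nat.stirlingFirst n k := by
  induction n generalizing k with
  | zero => cases k <;> simp [numCycles_eq, filter_eq']
  | succ n ih =>
    rw [card_filter_numCycles_congr (finSuccEquiv n)]
    rcases k with _ | k
    · simp [(numCycles_pos _).ne']
    · rw [card_filter_numCycles_option, ih, ih, Fintype.card_fin, Nat.stirlingFirst_succ_succ]

theorem card_filter_numCycles (k : ℕ) :
    #{σ : Perm α | numCycles σ = k} = Nat.stirlingFirst (Fintype.card α) k := by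
  rw [card_filter_numCycles_congr (Fintype.equivFin α), card_filter_numCycles_fin]

theorem card_filter_numCycles_fixing (a : α) (k : ℕ) :
    #{σ : Perm α | numCycles σ = k + 1 ∧ σ a = a} = Nat.stirlingFirst (Fintype.card α - 1) k := by
  let e : α ≃ Option {b // b ≠ a} := (optionSubtypeNe a).symm
  have he : e a = none := optionSubtypeNe_symm_self a
  rw [card_equiv e.permCongr (t := {σ | numCycles σ = k + 1 ∧ σ none = none}) ?_,
    card_filter_numCycles_fixing_none, card_filter_numCycles]
  · simp
  · intro σ
    simp [numCycles_permCongr, permCongr_apply, ← he]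

end Equiv.Perm

/-- For a uniform random permutation of `[n]` conditioned to have `k` cycles,
the probability that `n` is the smallest element of its cycle (equivalently,
a fixed point) equals `c(n-1,k-1)/c(n,k)`, and this probability is increasing
in `k` for `1 ≤ k ≤ n`. Cycles are counted as the number of nontrivial cycles
plus the number of fixed points. -/
theorem perm_conditioned_fixed_point_prob (n : ℕ) (hn : 1 ≤ n)
    (cycleCount : Equiv.Perm (Fin n) → ℕ)
    (hcc : ∀ σ, cycleCount σ =
      σ.cycleType.card + (Finset.univ.filter (fun x => σ x = x)).card) :
    (∀ k : ℕ, 1 ≤ k → k ≤ n →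
      ((Finset.univ.filter (fun σ : Equiv.Perm (Fin n) =>
          cycleCount σ = k ∧ σ ⟨n - 1, by omega⟩ = ⟨n - 1, by omega⟩)).card : ℝ) /
        ((Finset.univ.filter (fun σ : Equiv.Perm (Fin n) =>
          cycleCount σ = k)).card : ℝ) =
      (stirlingFirst (n - 1) (k - 1) : ℝ) / (stirlingFirst n k : ℝ)) ∧
    (∀ k : ℕ, 1 ≤ k → k + 1 ≤ n →
      ((Finset.univ.filter (fun σ : Equiv.Perm (Fin n) =>
          cycleCount σ = k ∧ σ ⟨n - 1, by omega⟩ = ⟨n - 1, by omega⟩)).card : ℝ) /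
        ((Finset.univ.filter (fun σ : Equiv.Perm (Fin n) =>
          cycleCount σ = k)).card : ℝ) ≤
      ((Finset.univ.filter (fun σ : Equiv.Perm (Fin n) =>
          cycleCount σ = k + 1 ∧ σ ⟨n - 1, by omega⟩ = ⟨n - 1, by omega⟩)).card : ℝ) /
        ((Finset.univ.filter (fun σ : Equiv.Perm (Fin n) =>
          cycleCount σ = k + 1)).card : ℝ)) := by
  obtain ⟨m, rfl⟩ : ∃ m, n = m + 1 := ⟨n - 1, by omega⟩
  have hcycles (σ : Equiv.Perm (Fin (m + 1))) : cycleCount σ = σ.numCycles := by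
    rw [hcc, Equiv.Perm.numCycles_eq_card_cycleType_add_card_fixedPoints]
  have hlast : (⟨m + 1 - 1, by omega⟩ : Fin (m + 1)) = Fin.last m := rfl
  simp only [hcycles, hlast, stirlingFirst_eq_nat_stirlingFirst,
    Equiv.Perm.card_filter_numCycles, Fintype.card_fin]
  refine ⟨fun k hk _ => ?_, fun k hk hkn => ?_⟩
  · obtain ⟨j, rfl⟩ := Nat.exists_eq_add_of_le' hk
    rw [Equiv.Perm.card_filter_numCycles_fixing]
    simp
  · obtain ⟨j, rfl⟩ := Nat.exists_eq_add_of_le' hk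
    rw [Equiv.Perm.card_filter_numCycles_fixing, Equiv.Perm.card_filter_numCycles_fixing]
    simpa using Nat.stirlingFirst_div_stirlingFirst_succ_le (by omega)
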